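/- For every algebraic model M and every assignment γ: V → M, there is a frame-based model K = (F, g) such that for all formulas φ of S5BKE: (M,γ) ⊨ φ if and only if K ⊨ φ. -/
import Mathlib


/-- Formulas of S5BKE over variables `x_n`, with primitive `¬`, `→`, `□`, `K`, `B`. -/
inductive Fm : Type
  | var : ℕ → Fm
  | neg : Fm → Fm
  | imp : Fm → Fm → Fm
  | box : Fm → Fm
  | K : Fm → Fm
  | B : Fm → Fm
  deriving DecidableEq

/-- `⊤` defined as usual. -/
def fmTop : Fm := Fm.imp (Fm.var 0) (Fm.var 0)
/-- `⊥` defined as usual. -/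
def fmBot : Fm := Fm.neg fmTop
/-- Conjunction, defined from `¬, →`. -/
def fmAnd (φ ψ : Fm) : Fm := Fm.neg (Fm.imp φ (Fm.neg ψ))
/-- Biconditional, defined as usual. -/
def fmIff (φ ψ : Fm) : Fm := fmAnd (Fm.imp φ ψ) (Fm.imp ψ φ)
/-- Propositional identity `φ ≡ ψ := □(φ ↔ ψ)`. -/
def fmEquiv (φ ψ : Fm) : Fm := Fm.box (fmIff φ ψ)

/-- Boolean evaluation treating variables and modal formulas as atoms. -/
def evalB (v : Fm → Bool) : Fm → Bool
  | Fm.neg φ => !evalB v φ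
  | Fm.imp φ ψ => !evalB v φ || evalB v ψ
  | φ => v φ

/-- `φ` has the form of a classical tautology. -/
def IsTaut (φ : Fm) : Prop := ∀ v : Fm → Bool, evalB v φ = true

/-- The axioms of S5BKE. -/
inductive Ax : Fm → Prop
  | taut {φ} : IsTaut φ → Ax φ
  | kRefl (φ) : Ax (Fm.imp (Fm.K φ) φ)
  | kB (φ) : Ax (Fm.imp (Fm.K φ) (Fm.B φ))
  | box4 (φ) : Ax (Fm.imp (Fm.box φ) (Fm.box (Fm.box φ)))
  | box5 (φ) : Ax (Fm.imp (Fm.neg (Fm.box φ)) (Fm.box (Fm.neg (Fm.box φ))))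
  | boxK (φ) : Ax (Fm.imp (Fm.box φ) (Fm.K φ))
  | kDist (φ ψ) : Ax (Fm.imp (Fm.K (Fm.imp φ ψ)) (Fm.imp (Fm.K φ) (Fm.K ψ)))
  | bDist (φ ψ) : Ax (Fm.imp (Fm.B (Fm.imp φ ψ)) (Fm.imp (Fm.B φ) (Fm.B ψ)))
  | boxDist (φ ψ) : Ax (Fm.imp (Fm.box (Fm.imp φ ψ)) (Fm.imp (Fm.box φ) (Fm.box ψ)))
  | consB : Ax (Fm.neg (Fm.B fmBot))

/-- Derivability in S5BKE: hypotheses, axioms, modus ponens, axiom necessitation. -/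
inductive Deriv (Φ : Set Fm) : Fm → Prop
  | hyp {φ} : φ ∈ Φ → Deriv Φ φ
  | ax {φ} : Ax φ → Deriv Φ φ
  | mp {φ ψ} : Deriv Φ (Fm.imp φ ψ) → Deriv Φ φ → Deriv Φ ψ
  | nec {φ} : Ax φ → Deriv Φ (Fm.box φ)

def Consistent (Φ : Set Fm) : Prop := ¬ Deriv Φ fmBot

def MaxConsistent (Γ : Set Fm) : Prop :=
  Consistent Γ ∧ ∀ Δ : Set Fm, Γ ⊂ Δ → ¬ Consistent Δ
/-- A filter on a Boolean algebra: nonempty, upward closed, closed under meets. -/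
def IsBAFilter {M : Type*} [BooleanAlgebra M] (F : Set M) : Prop :=
  F.Nonempty ∧ (∀ a b : M, a ∈ F → a ≤ b → b ∈ F) ∧ (∀ a b : M, a ∈ F → b ∈ F → a ⊓ b ∈ F)

/-- An ultrafilter on a Boolean algebra: a proper filter containing `a` or `aᶜ` for each `a`. -/
def IsBAUltrafilter {M : Type*} [BooleanAlgebra M] (U : Set M) : Prop :=
  IsBAFilter U ∧ ⊥ ∉ U ∧ ∀ a : M, a ∈ U ∨ aᶜ ∈ U

/-- An algebraic model of S5BKE on the Boolean algebra `M`. -/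
structure AlgModel (M : Type) [BooleanAlgebra M] where
  box : M → M
  opK : M → M
  opB : M → M
  TRUE : Set M
  true_ultra : IsBAUltrafilter TRUE
  box_eq_top : ∀ a : M, a = ⊤ → box a = ⊤
  box_eq_bot : ∀ a : M, a ≠ ⊤ → box a = ⊥
  know_bel : ∀ U : Set M, IsBAUltrafilter U →
    IsBAFilter {a : M | opK a ∈ U} ∧ ⊥ ∉ {a : M | opK a ∈ U} ∧
    IsBAFilter {a : M | opB a ∈ U} ∧ ⊥ ∉ {a : M | opB a ∈ U} ∧
    {a : M | opK a ∈ U} ⊆ U ∩ {a : M | opB a ∈ U}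

/-- Canonical extension of an assignment `γ : V → M` to all formulas. -/
def AlgModel.eval {M : Type} [BooleanAlgebra M] (𝕄 : AlgModel M) (γ : ℕ → M) : Fm → M
  | Fm.var n => γ n
  | Fm.neg φ => (𝕄.eval γ φ)ᶜ
  | Fm.imp φ ψ => (𝕄.eval γ φ)ᶜ ⊔ 𝕄.eval γ ψ
  | Fm.box φ => 𝕄.box (𝕄.eval γ φ)
  | Fm.K φ => 𝕄.opK (𝕄.eval γ φ)
  | Fm.B φ => 𝕄.opB (𝕄.eval γ φ)

/-- `(M,γ) ⊨ φ` iff `γ(φ) ∈ TRUE`. -/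
def Sat {M : Type} [BooleanAlgebra M] (𝕄 : AlgModel M) (γ : ℕ → M) (φ : Fm) : Prop :=
  𝕄.eval γ φ ∈ 𝕄.TRUE

/-- Algebraic logical consequence. -/
def Entails (Φ : Set Fm) (φ : Fm) : Prop :=
  ∀ (M : Type) [BooleanAlgebra M] (𝕄 : AlgModel M) (γ : ℕ → M),
    (∀ ψ ∈ Φ, Sat 𝕄 γ ψ) → Sat 𝕄 γ φ
/-- A frame `(W, P, E_K, E_B, w_T)` for S5BKE. -/
structure Frame where
  W : Type
  wT : W
  P : Set (Set W)
  EK : W → Set (Set W)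
  EB : W → Set (Set W)
  empty_mem : (∅ : Set W) ∈ P
  univ_mem : (Set.univ : Set W) ∈ P
  inter_mem : ∀ A B : Set W, A ∈ P → B ∈ P → A ∩ B ∈ P
  union_mem : ∀ A B : Set W, A ∈ P → B ∈ P → A ∪ B ∈ P
  compl_mem : ∀ A : Set W, A ∈ P → Aᶜ ∈ P
  kprop_mem : ∀ A : Set W, A ∈ P → {w : W | A ∈ EK w} ∈ P
  bprop_mem : ∀ A : Set W, A ∈ P → {w : W | A ∈ EB w} ∈ P
  EK_sub : ∀ w : W, EK w ⊆ P
  EB_sub : ∀ w : W, EB w ⊆ P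
  EK_nonempty : ∀ w : W, (EK w).Nonempty
  EK_inter : ∀ (w : W) (A B : Set W), A ∈ EK w → B ∈ EK w → A ∩ B ∈ EK w
  EK_up : ∀ (w : W) (A B : Set W), A ∈ EK w → A ⊆ B → B ∈ P → B ∈ EK w
  EK_fact : ∀ (w : W) (A : Set W), A ∈ EK w → w ∈ A
  EB_nonempty : ∀ w : W, (EB w).Nonempty
  EB_inter : ∀ (w : W) (A B : Set W), A ∈ EB w → B ∈ EB w → A ∩ B ∈ EB w
  EB_up : ∀ (w : W) (A B : Set W), A ∈ EB w → A ⊆ B → B ∈ P → B ∈ EB w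
  EB_proper : ∀ w : W, (∅ : Set W) ∉ EB w
  EK_sub_EB : ∀ w : W, EK w ⊆ EB w

/-- Satisfaction at worlds of a frame, relative to an assignment `g`. -/
def FSat (F : Frame) (g : ℕ → Set F.W) : Fm → F.W → Prop
  | Fm.var n => fun w => w ∈ g n
  | Fm.neg φ => fun w => ¬ FSat F g φ w
  | Fm.imp φ ψ => fun w => FSat F g φ w → FSat F g ψ w
  | Fm.box φ => fun _ => ∀ w' : F.W, FSat F g φ w'
  | Fm.K φ => fun w => {w' : F.W | FSat F g φ w'} ∈ F.EK w
  | Fm.B φ => fun w => {w' : F.W | FSat F g φ w'} ∈ F.EB w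

/-- A frame-based model `K = (F, g)`. -/
structure FModel where
  F : Frame
  g : ℕ → Set F.W
  g_mem : ∀ n : ℕ, g n ∈ F.P

/-- `K ⊨ φ` iff `w_T ⊨ φ`. -/
def FMSat (𝕂 : FModel) (φ : Fm) : Prop := FSat 𝕂.F 𝕂.g φ 𝕂.F.wT

/-- Frame-based logical consequence. -/
def FEntails (Φ : Set Fm) (φ : Fm) : Prop :=
  ∀ 𝕂 : FModel, (∀ ψ ∈ Φ, FMSat 𝕂 ψ) → FMSat 𝕂 φ

section StoneAux

variable {M : Type} [BooleanAlgebra M]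

lemma uf_top {U : Set M} (hU : IsBAUltrafilter U) : ⊤ ∈ U := by
  obtain ⟨⟨⟨a, ha⟩, hup, _⟩, _, _⟩ := hU
  exact hup a ⊤ ha le_top

lemma uf_compl_iff {U : Set M} (hU : IsBAUltrafilter U) (a : M) : aᶜ ∈ U ↔ a ∉ U := by
  obtain ⟨⟨_, hup, hinf⟩, hbot, htot⟩ := hU
  constructor
  · intro hc ha
    have := hinf a aᶜ ha hc
    rw [inf_compl_eq_bot] at this
    exact hbot this
  · intro ha
    rcases htot a with h | h
    · exact absurd h ha
    · exact h

lemma uf_mem_of_le {U : Set M} (hU : IsBAUltrafilter U) {a b : M} (ha : a ∈ U) (hab : a ≤ b) :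
    b ∈ U := hU.1.2.1 a b ha hab

lemma uf_inf_mem {U : Set M} (hU : IsBAUltrafilter U) {a b : M} (ha : a ∈ U) (hb : b ∈ U) :
    a ⊓ b ∈ U := hU.1.2.2 a b ha hb

/-- Ultrafilter extension (boolean prime ideal theorem via Zorn). -/
lemma exists_uf {a : M} (ha : a ≠ ⊥) : ∃ U : Set M, IsBAUltrafilter U ∧ a ∈ U := by
  set S : Set (Set M) := {F | IsBAFilter F ∧ ⊥ ∉ F ∧ a ∈ F} with hS
  have hbase : {b : M | a ≤ b} ∈ S := by
    refine ⟨⟨⟨a, le_rfl⟩, ?_, ?_⟩, ?_, le_rfl⟩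
    · intro x y hx hxy; exact le_trans hx hxy
    · intro x y hx hy; exact le_inf hx hy
    · intro h; exact ha (le_bot_iff.mp h)
  have Hc : ∀ c ⊆ S, IsChain (· ⊆ ·) c → c.Nonempty → ∃ ub ∈ S, ∀ s ∈ c, s ⊆ ub := by
    intro c hcS hchain hcne
    refine ⟨⋃₀ c, ⟨⟨?_, ?_, ?_⟩, ?_, ?_⟩, fun s hs => Set.subset_sUnion_of_mem hs⟩
    · obtain ⟨F, hF⟩ := hcne
      obtain ⟨x, hx⟩ := (hcS hF).1.1
      exact ⟨x, F, hF, hx⟩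
    · rintro x y ⟨F, hF, hx⟩ hxy
      exact ⟨F, hF, (hcS hF).1.2.1 x y hx hxy⟩
    · rintro x y ⟨F, hF, hx⟩ ⟨G, hG, hy⟩
      rcases eq_or_ne F G with rfl | hne
      · exact ⟨F, hF, (hcS hF).1.2.2 x y hx hy⟩
      rcases hchain hF hG hne with h | h
      · exact ⟨G, hG, (hcS hG).1.2.2 x y (h hx) hy⟩
      · exact ⟨F, hF, (hcS hF).1.2.2 x y hx (h hy)⟩
    · rintro ⟨F, hF, hbot⟩
      exact (hcS hF).2.1 hbot
    · obtain ⟨F, hF⟩ := hcne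
      exact ⟨F, hF, (hcS hF).2.2⟩
  obtain ⟨F, hsubF, hFS, hFmax⟩ := zorn_subset_nonempty S Hc _ hbase
  · refine ⟨F, ⟨hFS.1, hFS.2.1, ?_⟩, hFS.2.2⟩
    intro b
    by_cases hb : b ∈ F
    · exact Or.inl hb
    right
    -- the filter generated by F and b
    set F' : Set M := {c | ∃ u ∈ F, u ⊓ b ≤ c} with hF'
    have hFF' : F ⊆ F' := fun c hc => ⟨c, hc, inf_le_left⟩
    have hbF' : b ∈ F' := ⟨⊤, uf_top' hFS.1, by simp⟩
    have hF'filt : IsBAFilter F' := by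
      refine ⟨⟨b, hbF'⟩, ?_, ?_⟩
      · rintro x y ⟨u, hu, hux⟩ hxy; exact ⟨u, hu, le_trans hux hxy⟩
      · rintro x y ⟨u, hu, hux⟩ ⟨v, hv, hvy⟩
        refine ⟨u ⊓ v, hFS.1.2.2 u v hu hv, ?_⟩
        calc u ⊓ v ⊓ b ≤ (u ⊓ b) ⊓ (v ⊓ b) := by
              refine le_inf (inf_le_inf_right b inf_le_left) (inf_le_inf_right b inf_le_right)
          _ ≤ x ⊓ y := inf_le_inf hux hvy
    by_cases hbot' : ⊥ ∈ F'
    · obtain ⟨u, hu, hub⟩ := hbot'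
      have : u ≤ bᶜ := by
        have := le_bot_iff.mp hub
        exact le_compl_iff_disjoint_right.mpr (disjoint_iff.mpr this)
      exact hFS.1.2.1 u bᶜ hu this
    · exfalso
      have hF'S : F' ∈ S := ⟨hF'filt, hbot', hFF' hFS.2.2⟩
      have hsub' : F' ⊆ F := hFmax hF'S hFF'
      exact hb (hsub' hbF')
where
  uf_top' {F : Set M} (hF : IsBAFilter F) : ⊤ ∈ F := by
    obtain ⟨⟨x, hx⟩, hup, _⟩ := hF
    exact hup x ⊤ hx le_top

/-- The type of worlds: ultrafilters of `M`. -/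
abbrev Wld (M : Type) [BooleanAlgebra M] : Type := {U : Set M // IsBAUltrafilter U}

/-- Stone map. -/
def hat (a : M) : Set (Wld M) := {U | a ∈ U.1}

lemma hat_le_of_subset {a b : M} (h : hat a ⊆ hat b) : a ≤ b := by
  by_contra hab
  have hne : a ⊓ bᶜ ≠ ⊥ := by
    intro h0
    rw [← sdiff_eq, sdiff_eq_bot_iff] at h0
    exact hab h0
  obtain ⟨U, hU, hmem⟩ := exists_uf hne
  have ha : a ∈ U := uf_mem_of_le hU hmem inf_le_left
  have hbc : bᶜ ∈ U := uf_mem_of_le hU hmem inf_le_right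
  have hb : b ∈ U := h (show (⟨U, hU⟩ : Wld M) ∈ hat a from ha)
  exact ((uf_compl_iff hU b).mp hbc) hb

lemma hat_inj {a b : M} (h : hat a = hat b) : a = b :=
  le_antisymm (hat_le_of_subset h.le) (hat_le_of_subset h.ge)

lemma hat_top : hat (⊤ : M) = Set.univ :=
  Set.eq_univ_of_forall fun U => uf_top U.2

lemma hat_bot : hat (⊥ : M) = ∅ := by
  ext U; simp only [hat, Set.mem_setOf_eq, Set.mem_empty_iff_false, iff_false]
  exact fun h => U.2.2.1 h

lemma hat_compl (a : M) : hat (aᶜ) = (hat a)ᶜ := by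
  ext U; exact uf_compl_iff U.2 a

lemma hat_inf (a b : M) : hat (a ⊓ b) = hat a ∩ hat b := by
  ext U
  constructor
  · intro h
    exact ⟨uf_mem_of_le U.2 h inf_le_left, uf_mem_of_le U.2 h inf_le_right⟩
  · rintro ⟨h1, h2⟩; exact uf_inf_mem U.2 h1 h2

lemma hat_sup (a b : M) : hat (a ⊔ b) = hat a ∪ hat b := by
  have : a ⊔ b = (aᶜ ⊓ bᶜ)ᶜ := by simp
  rw [this, hat_compl, hat_inf, hat_compl, hat_compl, Set.compl_inter, compl_compl, compl_compl]

lemma hat_eq_univ_iff {a : M} : hat a = Set.univ ↔ a = ⊤ := by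
  constructor
  · intro h
    by_contra ha
    have : aᶜ ≠ ⊥ := by simpa [compl_eq_bot] using ha
    obtain ⟨U, hU, hmem⟩ := exists_uf this
    have : a ∈ U := by
      have : (⟨U, hU⟩ : Wld M) ∈ hat a := h ▸ Set.mem_univ _
      exact this
    exact ((uf_compl_iff hU a).mp hmem) this
  · rintro rfl; exact hat_top

/-- The frame built from an algebraic model. -/
@[reducible] noncomputable def frameOf (𝕄 : AlgModel M) : Frame where
  W := Wld M
  wT := ⟨𝕄.TRUE, 𝕄.true_ultra⟩
  P := Set.range hat
  EK U := {S | ∃ a, S = hat a ∧ 𝕄.opK a ∈ U.1}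
  EB U := {S | ∃ a, S = hat a ∧ 𝕄.opB a ∈ U.1}
  empty_mem := ⟨⊥, hat_bot⟩
  univ_mem := ⟨⊤, hat_top⟩
  inter_mem := by rintro _ _ ⟨a, rfl⟩ ⟨b, rfl⟩; exact ⟨a ⊓ b, hat_inf a b⟩
  union_mem := by rintro _ _ ⟨a, rfl⟩ ⟨b, rfl⟩; exact ⟨a ⊔ b, hat_sup a b⟩
  compl_mem := by rintro _ ⟨a, rfl⟩; exact ⟨aᶜ, hat_compl a⟩
  kprop_mem := by
    rintro _ ⟨a, rfl⟩
    refine ⟨𝕄.opK a, Set.ext fun U => ⟨fun h => ⟨a, rfl, h⟩, ?_⟩⟩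
    rintro ⟨b, hb, hKb⟩
    rw [hat_inj hb]
    exact hKb
  bprop_mem := by
    rintro _ ⟨a, rfl⟩
    refine ⟨𝕄.opB a, Set.ext fun U => ⟨fun h => ⟨a, rfl, h⟩, ?_⟩⟩
    rintro ⟨b, hb, hBb⟩
    rw [hat_inj hb]
    exact hBb
  EK_sub := by rintro U _ ⟨a, rfl, _⟩; exact ⟨a, rfl⟩
  EB_sub := by rintro U _ ⟨a, rfl, _⟩; exact ⟨a, rfl⟩
  EK_nonempty := by
    intro U
    obtain ⟨⟨⟨a, ha⟩, _, _⟩, _, _, _, _⟩ := 𝕄.know_bel U.1 U.2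
    exact ⟨hat a, a, rfl, ha⟩
  EK_inter := by
    rintro U _ _ ⟨a, rfl, hKa⟩ ⟨b, rfl, hKb⟩
    obtain ⟨⟨_, _, hinf⟩, _, _, _, _⟩ := 𝕄.know_bel U.1 U.2
    exact ⟨a ⊓ b, (hat_inf a b).symm, hinf a b hKa hKb⟩
  EK_up := by
    rintro U _ _ ⟨a, rfl, hKa⟩ hsub ⟨b, rfl⟩
    obtain ⟨⟨_, hup, _⟩, _, _, _, _⟩ := 𝕄.know_bel U.1 U.2
    exact ⟨b, rfl, hup a b hKa (hat_le_of_subset hsub)⟩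
  EK_fact := by
    rintro U _ ⟨a, rfl, hKa⟩
    obtain ⟨_, _, _, _, hsub⟩ := 𝕄.know_bel U.1 U.2
    exact (hsub hKa).1
  EB_nonempty := by
    intro U
    obtain ⟨_, _, ⟨⟨a, ha⟩, _, _⟩, _, _⟩ := 𝕄.know_bel U.1 U.2
    exact ⟨hat a, a, rfl, ha⟩
  EB_inter := by
    rintro U _ _ ⟨a, rfl, hBa⟩ ⟨b, rfl, hBb⟩
    obtain ⟨_, _, ⟨_, _, hinf⟩, _, _⟩ := 𝕄.know_bel U.1 U.2
    exact ⟨a ⊓ b, (hat_inf a b).symm, hinf a b hBa hBb⟩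
  EB_up := by
    rintro U _ _ ⟨a, rfl, hBa⟩ hsub ⟨b, rfl⟩
    obtain ⟨_, _, ⟨_, hup, _⟩, _, _⟩ := 𝕄.know_bel U.1 U.2
    exact ⟨b, rfl, hup a b hBa (hat_le_of_subset hsub)⟩
  EB_proper := by
    rintro U ⟨a, ha, hBa⟩
    obtain ⟨_, _, _, hbot, _⟩ := 𝕄.know_bel U.1 U.2
    have : a = ⊥ := hat_inj (ha.symm.trans hat_bot.symm)
    exact hbot (this ▸ hBa)
  EK_sub_EB := by
    rintro U _ ⟨a, rfl, hKa⟩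
    obtain ⟨_, _, _, _, hsub⟩ := 𝕄.know_bel U.1 U.2
    exact ⟨a, rfl, (hsub hKa).2⟩

/-- Truth lemma. -/
lemma truth_lemma (𝕄 : AlgModel M) (γ : ℕ → M) (φ : Fm) (U : Wld M) :
    FSat (frameOf 𝕄) (fun n => hat (γ n)) φ U ↔ 𝕄.eval γ φ ∈ U.1 := by
  induction φ generalizing U with
  | var n => rfl
  | neg φ ih =>
    simp only [FSat, AlgModel.eval, ih, uf_compl_iff U.2]
  | imp φ ψ ih1 ih2 =>
    simp only [FSat, AlgModel.eval, ih1, ih2]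
    constructor
    · intro h
      by_cases hφ : 𝕄.eval γ φ ∈ U.1
      · exact uf_mem_of_le U.2 (h hφ) le_sup_right
      · exact uf_mem_of_le U.2 ((uf_compl_iff U.2 _).mpr hφ) le_sup_left
    · intro h hφ
      have := uf_inf_mem U.2 h hφ
      refine uf_mem_of_le U.2 this ?_
      rw [inf_comm, inf_sup_left]
      simp
  | box φ ih =>
    simp only [FSat, AlgModel.eval]
    constructor
    · intro h
      have : hat (𝕄.eval γ φ) = Set.univ := Set.eq_univ_of_forall fun V => (ih V).mp (h V)
      rw [𝕄.box_eq_top _ (hat_eq_univ_iff.mp this)]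
      exact uf_top U.2
    · intro h V
      by_cases hφ : 𝕄.eval γ φ = ⊤
      · exact (ih V).mpr (hφ ▸ uf_top V.2)
      · exact absurd (𝕄.box_eq_bot _ hφ ▸ h) U.2.2.1
  | K φ ih =>
    simp only [FSat, AlgModel.eval]
    have hset : {w : Wld M | FSat (frameOf 𝕄) (fun n => hat (γ n)) φ w} = hat (𝕄.eval γ φ) :=
      Set.ext fun V => ih V
    constructor
    · rintro ⟨a, ha, hKa⟩
      rwa [hat_inj ((hset ▸ ha : hat (𝕄.eval γ φ) = hat a))]
    · intro h
      exact ⟨𝕄.eval γ φ, hset, h⟩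
  | B φ ih =>
    simp only [FSat, AlgModel.eval]
    have hset : {w : Wld M | FSat (frameOf 𝕄) (fun n => hat (γ n)) φ w} = hat (𝕄.eval γ φ) :=
      Set.ext fun V => ih V
    constructor
    · rintro ⟨a, ha, hBa⟩
      rwa [hat_inj ((hset ▸ ha : hat (𝕄.eval γ φ) = hat a))]
    · intro h
      exact ⟨𝕄.eval γ φ, hset, h⟩

end StoneAux

/-- every algebraic interpretation is matched by a frame-based model. -/
theorem alg_to_frame (M : Type) [BooleanAlgebra M] (𝕄 : AlgModel M) (γ : ℕ → M) :
    ∃ 𝕂 : FModel, ∀ φ : Fm, Sat 𝕄 γ φ ↔ FMSat 𝕂 φ := by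
  refine ⟨⟨frameOf 𝕄, fun n => hat (γ n), fun n => ⟨γ n, rfl⟩⟩, fun φ => ?_⟩
  exact (truth_lemma 𝕄 γ φ ⟨𝕄.TRUE, 𝕄.true_ultra⟩).symm
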